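/- For every even integer n ≥ 2, the Sombor characteristic polynomial of the order super commuting graph Δ^o(Q_{4n}) of the generalized quaternion group Q_{4n} equals (x + (4n−1)·√2)^{4n−1} · (x − (4n−1)²·√2); equivalently, the Sombor spectrum of Δ^o(Q_{4n}) consists of −(4n−1)·√2 with multiplicity 4n−1 and (4n−1)²·√2 with multiplicity 1. -/

import Mathlib

open Polynomial
open scoped Classical

/-!
For even `n`, `a (n / 2)` has order `4`, as does every element `xa j` outside the cyclic subgroup
`⟨a⟩`. So `Δ^o(Q_{4n})` is complete: powers of `a` commute, elements outside `⟨a⟩` share their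
order, and a power of `a` whose order is not `4` commutes with `a (n / 2)`, which is
order-equivalent to every `xa j`. The Sombor matrix of the complete graph on `N` vertices is
`(N - 1)√2 (J - I)`, and `J - I` has eigenvalue `N - 1` once and `-1` with multiplicity `N - 1`.
-/

/-- Degree of a vertex. -/
noncomputable def sdeg {V : Type*} (G : SimpleGraph V) (v : V) : ℕ := {u | G.Adj v u}.ncard

/-- Sombor matrix of a graph. -/
noncomputable def somborMatrix {V : Type*} (G : SimpleGraph V) : Matrix V V ℝ :=
  Matrix.of fun u v =>
    if G.Adj u v then Real.sqrt ((sdeg G u : ℝ) ^ 2 + (sdeg G v : ℝ) ^ 2) else 0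

/-- Sombor characteristic polynomial det(x·I − S(Γ)). -/
noncomputable def somborCharpoly {V : Type*} [Fintype V] [DecidableEq V] (G : SimpleGraph V) :
    Polynomial ℝ :=
  (somborMatrix G).charpoly

noncomputable def rt2 : ℝ := Real.sqrt 2

/-- The `R`-super `Γ` graph. -/
def superGraph {V : Type*} (A : SimpleGraph V) (r : V → V → Prop) (hr : Equivalence r) :
    SimpleGraph V where
  Adj x y := x ≠ y ∧ (r x y ∨ ∃ x' y', r x x' ∧ r y y' ∧ A.Adj x' y')
  symm := ⟨by
    rintro x y ⟨hxy, h | ⟨x', y', hx, hy, hadj⟩⟩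
    · exact ⟨hxy.symm, Or.inl (hr.symm h)⟩
    · exact ⟨hxy.symm, Or.inr ⟨y', x', hy, hx, hadj.symm⟩⟩⟩
  loopless := ⟨by rintro x ⟨h, -⟩; exact h rfl⟩

/-- Same-order relation. -/
def orderRel (G : Type*) [Monoid G] : G → G → Prop := fun x y => orderOf x = orderOf y

theorem orderRel_equivalence (G : Type*) [Monoid G] : Equivalence (orderRel G) :=
  ⟨fun _ => rfl, fun h => h.symm, fun h1 h2 => h1.trans h2⟩

/-- Conjugacy relation. -/
def conjRel (G : Type*) [Group G] : G → G → Prop := fun x y => ∃ a : G, x = a * y * a⁻¹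

theorem conjRel_equivalence (G : Type*) [Group G] : Equivalence (conjRel G) := by
  constructor
  · intro x; exact ⟨1, by simp⟩
  · rintro x y ⟨a, rfl⟩; exact ⟨a⁻¹, by group⟩
  · rintro x y z ⟨a, rfl⟩ ⟨b, rfl⟩; exact ⟨a * b, by group⟩

/-- Commuting graph. -/
def commutingGraph (G : Type*) [Group G] : SimpleGraph G where
  Adj x y := x ≠ y ∧ x * y = y * x
  symm := ⟨by rintro x y ⟨h, c⟩; exact ⟨h.symm, c.symm⟩⟩
  loopless := ⟨by rintro x ⟨h, -⟩; exact h rfl⟩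

/-- Power graph. -/
def powerGraph (G : Type*) [Group G] : SimpleGraph G where
  Adj x y := x ≠ y ∧ (x ∈ Subgroup.zpowers y ∨ y ∈ Subgroup.zpowers x)
  symm := ⟨by rintro x y ⟨h, c⟩; exact ⟨h.symm, c.symm⟩⟩
  loopless := ⟨by rintro x ⟨h, -⟩; exact h rfl⟩

/-- Enhanced power graph. -/
def enhancedPowerGraph (G : Type*) [Group G] : SimpleGraph G where
  Adj x y := x ≠ y ∧ ∃ z : G, x ∈ Subgroup.zpowers z ∧ y ∈ Subgroup.zpowers z
  symm := ⟨by rintro x y ⟨h, z, hx, hy⟩; exact ⟨h.symm, z, hy, hx⟩⟩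
  loopless := ⟨by rintro x ⟨h, -⟩; exact h rfl⟩

section Determinant

variable {K V : Type*} [Field K] [Fintype V] [DecidableEq V]

open Matrix in
theorem det_smul_one_add_replicateCol_mul_replicateRow {t : K} (ht : t ≠ 0) (u v : V → K) :
    (t • (1 : Matrix V V K) + replicateCol Unit u * replicateRow Unit v).det =
      t ^ Fintype.card V * (1 + t⁻¹ * (v ⬝ᵥ u)) := by
  have hfactor : t • (1 : Matrix V V K) + replicateCol Unit u * replicateRow Unit v =
      t • (1 + replicateCol Unit (t⁻¹ • u) * replicateRow Unit v) := by
    rw [smul_add, replicateCol_smul, Matrix.smul_mul, smul_smul, mul_inv_cancel₀ ht, one_smul]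
  rw [hfactor, det_smul, det_one_add_replicateCol_mul_replicateRow, dotProduct_smul, smul_eq_mul]

theorem charpoly_const_offDiag [Infinite K] [Nonempty V] (c : K) :
    (Matrix.of fun u v : V => if u = v then 0 else c).charpoly =
      (X + C c) ^ (Fintype.card V - 1) * (X - C ((Fintype.card V - 1 : ℕ) * c)) := by
  set N := Fintype.card V with hN
  have hN1 : 1 ≤ N := Fintype.card_pos
  refine eq_of_infinite_eval_eq _ _ ((Set.finite_singleton (-c)).infinite_compl.mono fun x hx => ?_)
  have hxc : x + c ≠ 0 := fun h => hx (eq_neg_of_add_eq_zero_left h)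
  have hrankOne : Matrix.scalar V x - Matrix.of (fun u v : V => if u = v then 0 else c) =
      (x + c) • (1 : Matrix V V K) +
        Matrix.replicateCol Unit (fun _ : V => -c) *
          Matrix.replicateRow Unit (fun _ : V => (1 : K)) := by
    ext u v
    by_cases h : u = v
    · subst h; simp [Matrix.mul_apply]
    · simp [Matrix.mul_apply, Matrix.one_apply_ne h, h]
  change eval x _ = eval x _
  rw [Matrix.eval_charpoly, hrankOne, det_smul_one_add_replicateCol_mul_replicateRow hxc]
  simp only [dotProduct, one_mul, Finset.sum_const, Finset.card_univ, ← hN, nsmul_eq_mul,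
    eval_mul, eval_pow, eval_add, eval_sub, eval_X, eval_C, Nat.cast_sub hN1, Nat.cast_one]
  rw [← pow_sub_one_mul (by omega : N ≠ 0)]
  field_simp
  ring

end Determinant

theorem sdeg_top {V : Type*} [Fintype V] (v : V) :
    sdeg (⊤ : SimpleGraph V) v = Fintype.card V - 1 := by
  have hnbhd : {u | (⊤ : SimpleGraph V).Adj v u} = ({v}ᶜ : Set V) := by
    ext u; simp [eq_comm]
  rw [sdeg, hnbhd, Set.ncard_eq_toFinset_card']
  simp [Set.toFinset_compl, Finset.card_compl]

theorem somborMatrix_top {V : Type*} [Fintype V] [DecidableEq V] :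
    somborMatrix (⊤ : SimpleGraph V) =
      Matrix.of fun u v => if u = v then 0 else ((Fintype.card V - 1 : ℕ) : ℝ) * rt2 := by
  ext u v
  by_cases h : u = v
  · simp [somborMatrix, h]
  · have hsq : ∀ a : ℝ, 0 ≤ a → Real.sqrt (a ^ 2 + a ^ 2) = a * rt2 := fun a ha => by
      rw [← two_mul, Real.sqrt_mul zero_le_two, Real.sqrt_sq ha, rt2, mul_comm]
    simp [somborMatrix, h, sdeg_top, hsq]

theorem somborCharpoly_top {V : Type*} [Fintype V] [DecidableEq V] [Nonempty V] :
    somborCharpoly (⊤ : SimpleGraph V) =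
      (X + C ((Fintype.card V - 1 : ℕ) * rt2)) ^ (Fintype.card V - 1) *
        (X - C ((Fintype.card V - 1 : ℕ) * ((Fintype.card V - 1 : ℕ) * rt2))) := by
  rw [somborCharpoly, somborMatrix_top, charpoly_const_offDiag]

theorem superGraph_commutingGraph_orderRel_eq_top {G : Type*} [Group G] {s : Set G}
    (hs : s.Pairwise Commute) {k : G} (hk : k ∈ s) (hout : ∀ x ∉ s, orderOf x = orderOf k) :
    superGraph (commutingGraph G) (orderRel G) (orderRel_equivalence G) = ⊤ := by
  have hmixed : ∀ x y, x ≠ y → x ∈ s → y ∉ s →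
      (superGraph (commutingGraph G) (orderRel G) (orderRel_equivalence G)).Adj x y := by
    intro x y hxy hx hy
    refine ⟨hxy, ?_⟩
    by_cases hxk : orderOf x = orderOf k
    · exact Or.inl (hxk.trans (hout y hy).symm)
    · have hne : x ≠ k := fun h => hxk (congrArg orderOf h)
      exact Or.inr ⟨x, k, rfl, hout y hy, hne, hs hx hk hne⟩
  ext x y
  refine ⟨fun h => h.1, fun hxy => ?_⟩
  by_cases hx : x ∈ s <;> by_cases hy : y ∈ s
  · exact ⟨hxy, Or.inr ⟨x, y, rfl, rfl, hxy, hs hx hy hxy⟩⟩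
  · exact hmixed x y hxy hx hy
  · exact (hmixed y x (Ne.symm hxy) hy hx).symm
  · exact ⟨hxy, Or.inl ((hout x hx).trans (hout y hy).symm)⟩

namespace QuaternionGroup

variable {n : ℕ} [NeZero n]

theorem exists_orderOf_a_eq_four (heven : Even n) :
    ∃ i : ZMod (2 * n), orderOf (a i : QuaternionGroup n) = 4 := by
  obtain ⟨m, rfl⟩ := heven
  have hm : 0 < m := by have := NeZero.pos (m + m); omega
  refine ⟨m, ?_⟩
  rw [orderOf_a, ZMod.val_natCast, Nat.mod_eq_of_lt (by omega),
    show 2 * (m + m) = m * 4 by ring, Nat.gcd_mul_right_left, Nat.mul_div_cancel_left _ hm]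

theorem superGraph_commutingGraph_orderRel_eq_top (heven : Even n) :
    superGraph (commutingGraph (QuaternionGroup n)) (orderRel (QuaternionGroup n))
      (orderRel_equivalence (QuaternionGroup n)) = ⊤ := by
  obtain ⟨i, hi⟩ := exists_orderOf_a_eq_four heven
  refine _root_.superGraph_commutingGraph_orderRel_eq_top (s := Set.range a) ?_ ⟨i, rfl⟩ ?_
  · rintro _ ⟨j, rfl⟩ _ ⟨k, rfl⟩ -
    simp [Commute, SemiconjBy, add_comm]
  · rintro (j | j) hj
    · exact absurd ⟨j, rfl⟩ hj
    · rw [hi, orderOf_xa]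

end QuaternionGroup

theorem stmt9_general (n : ℕ) [NeZero n] (heven : Even n) :
    somborCharpoly (superGraph (commutingGraph (QuaternionGroup n))
        (orderRel (QuaternionGroup n)) (orderRel_equivalence (QuaternionGroup n))) =
      (X + C ((4 * (n : ℝ) - 1) * rt2)) ^ (4 * n - 1) *
        (X - C ((4 * (n : ℝ) - 1) ^ 2 * rt2)) := by
  have hN : ((4 * n - 1 : ℕ) : ℝ) = 4 * (n : ℝ) - 1 := by
    rw [Nat.cast_sub (by have := NeZero.pos n; omega)]
    push_cast
    ring
  rw [QuaternionGroup.superGraph_commutingGraph_orderRel_eq_top heven, somborCharpoly_top,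
    QuaternionGroup.card, hN, ← mul_assoc, ← sq]

theorem stmt9 (n : ℕ) [NeZero n] (hn : 2 ≤ n) (heven : Even n) :
    somborCharpoly (superGraph (commutingGraph (QuaternionGroup n))
        (orderRel (QuaternionGroup n)) (orderRel_equivalence (QuaternionGroup n))) =
      (X + C ((4 * (n : ℝ) - 1) * rt2)) ^ (4 * n - 1) *
        (X - C ((4 * (n : ℝ) - 1) ^ 2 * rt2)) :=
  stmt9_general n heven
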